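/- arXiv:1811.08775 — 2 statements merged into one kernel-verified Lean document; each statement's English description precedes it below -/
import Mathlib

section
/- Δ-system combination step for independent families: let X ⊆ [ω]^ω be independent, and suppose x ≠ y are almost disjoint infinite sets, F_x, G_x, F_y, G_y are finite disjoint pairs of subsets of X with σ(F_x,G_x) ⊆* x and σ(F_y,G_y) ⊆* y, and (F_x ∪ G_x) ∩ (F_y ∪ G_y) = R with R ∩ F_x = R ∩ F_y and R ∩ G_x = R ∩ G_y. Then (F_x ∪ F_y) ∩ (G_x ∪ G_y) = ∅ and σ(F_x ∪ F_y, G_x ∪ G_y) is finite, contradicting the independence of X. Hence no such configuration exists. -/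
def AlmostSub (a b : Set ℕ) : Prop := (a \ b).Finite

def sigmaFG (F G : Finset (Set ℕ)) : Set ℕ :=
  (⋂ a ∈ (F : Set (Set ℕ)), a) ∩ ⋂ b ∈ (G : Set (Set ℕ)), bᶜ

def IsIndependentFamily (X : Set (Set ℕ)) : Prop :=
  ∀ F G : Finset (Set ℕ), ↑F ⊆ X → ↑G ⊆ X → Disjoint F G → (sigmaFG F G).Infinite

open scoped Classical

/- Both `σ(F_x, G_x)` and `σ(F_y, G_y)` contain `σ(F_x ∪ F_y, G_x ∪ G_y)`, which is therefore
almost contained in the finite set `x ∩ y`. The agreement of the two pairs on the common part `R`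
makes `(F_x ∪ F_y, G_x ∪ G_y)` a disjoint pair, so independence forces it to be infinite. -/

theorem Finset.disjoint_union_union_of_inter_eq {α : Type*} [DecidableEq α]
    {F₁ G₁ F₂ G₂ R : Finset α} (h₁ : Disjoint F₁ G₁) (h₂ : Disjoint F₂ G₂)
    (hR : (F₁ ∪ G₁) ∩ (F₂ ∪ G₂) ⊆ R) (hF : R ∩ F₁ = R ∩ F₂) (hG : R ∩ G₁ = R ∩ G₂) :
    Disjoint (F₁ ∪ F₂) (G₁ ∪ G₂) := by
  rw [Finset.disjoint_left]
  intro a haF haG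
  rcases Finset.mem_union.mp haF with ha | ha <;> rcases Finset.mem_union.mp haG with hb | hb
  · exact Finset.disjoint_left.mp h₁ ha hb
  · have haR : a ∈ R := hR (by simp [ha, hb])
    have haF₂ : a ∈ R ∩ F₂ := hF ▸ Finset.mem_inter.mpr ⟨haR, ha⟩
    exact Finset.disjoint_left.mp h₂ (Finset.mem_inter.mp haF₂).2 hb
  · have haR : a ∈ R := hR (by simp [ha, hb])
    have haG₂ : a ∈ R ∩ G₂ := hG ▸ Finset.mem_inter.mpr ⟨haR, hb⟩
    exact Finset.disjoint_left.mp h₂ ha (Finset.mem_inter.mp haG₂).2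
  · exact Finset.disjoint_left.mp h₂ ha hb

theorem sigmaFG_union (F₁ G₁ F₂ G₂ : Finset (Set ℕ)) :
    sigmaFG (F₁ ∪ F₂) (G₁ ∪ G₂) = sigmaFG F₁ G₁ ∩ sigmaFG F₂ G₂ := by
  simp only [sigmaFG, Finset.coe_union, Set.biInter_union]
  exact Set.inter_inter_inter_comm _ _ _ _

theorem AlmostSub.inter_finite {a b x y : Set ℕ} (ha : AlmostSub a x) (hb : AlmostSub b y)
    (hxy : (x ∩ y).Finite) : (a ∩ b).Finite := by
  refine ((ha.union hb).union hxy).subset fun n ⟨hna, hnb⟩ => ?_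
  by_cases hnx : n ∈ x <;> by_cases hny : n ∈ y <;> simp_all

theorem delta_system_step_general (X : Set (Set ℕ)) (hX : IsIndependentFamily X)
    (x y : Set ℕ)
    (had : (x ∩ y).Finite)
    (Fx Gx Fy Gy R : Finset (Set ℕ))
    (hFx : ↑Fx ⊆ X) (hGx : ↑Gx ⊆ X) (hFy : ↑Fy ⊆ X) (hGy : ↑Gy ⊆ X)
    (hdx : Disjoint Fx Gx) (hdy : Disjoint Fy Gy)
    (hsx : AlmostSub (sigmaFG Fx Gx) x) (hsy : AlmostSub (sigmaFG Fy Gy) y)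
    (hR : (Fx ∪ Gx) ∩ (Fy ∪ Gy) = R)
    (hRF : R ∩ Fx = R ∩ Fy) (hRG : R ∩ Gx = R ∩ Gy) :
    False := by
  have hdisj : Disjoint (Fx ∪ Fy) (Gx ∪ Gy) :=
    Finset.disjoint_union_union_of_inter_eq hdx hdy hR.subset hRF hRG
  have hfin : (sigmaFG (Fx ∪ Fy) (Gx ∪ Gy)).Finite := by
    rw [sigmaFG_union]
    exact hsx.inter_finite hsy had
  refine hX (Fx ∪ Fy) (Gx ∪ Gy) ?_ ?_ hdisj hfin
  · simpa only [Finset.coe_union] using Set.union_subset hFx hFy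
  · simpa only [Finset.coe_union] using Set.union_subset hGx hGy

/-- Δ-system combination step for independent families: no configuration as described can
exist (its existence would make `σ(F_x ∪ F_y, G_x ∪ G_y)` finite with
`(F_x ∪ F_y) ∩ (G_x ∪ G_y) = ∅`, contradicting independence). -/
theorem delta_system_step (X : Set (Set ℕ)) (hX : IsIndependentFamily X)
    (x y : Set ℕ) (hxy : x ≠ y) (hx : x.Infinite) (hy : y.Infinite)
    (had : (x ∩ y).Finite)
    (Fx Gx Fy Gy R : Finset (Set ℕ))
    (hFx : ↑Fx ⊆ X) (hGx : ↑Gx ⊆ X) (hFy : ↑Fy ⊆ X) (hGy : ↑Gy ⊆ X)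
    (hdx : Disjoint Fx Gx) (hdy : Disjoint Fy Gy)
    (hsx : AlmostSub (sigmaFG Fx Gx) x) (hsy : AlmostSub (sigmaFG Fy Gy) y)
    (hR : (Fx ∪ Gx) ∩ (Fy ∪ Gy) = R)
    (hRF : R ∩ Fx = R ∩ Fy) (hRG : R ∩ Gx = R ∩ Gy) :
    False :=
  delta_system_step_general X hX x y had Fx Gx Fy Gy R hFx hGx hFy hGy hdx hdy hsx hsy hR hRF hRG
end

section
/- The cofinal-branches tree pruning claim: let T be a tree on 2 × ω with X = p[T] (the projection of the branches) a subset of [ω]^ω linearly ordered by ⊆* with no pseudointersection, and assume X is countably directed downward-cofinally witnessed. Then the subtree T' = { (s,t) ∈ T : p[T_{(s,t)}] is cofinal in X } satisfies: for every (s,t) ∈ T', p[T'_{(s,t)}] is cofinal in X. -/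
abbrev Cantor : Type := ℕ → Bool

def cset (x : Cantor) : Set ℕ := {n | x n = true}

/-- `(x, w)` is a branch through the tree `T` on `2 × ω`. -/
def IsBranch (T : Set (List Bool × List ℕ)) (x : Cantor) (w : ℕ → ℕ) : Prop :=
  ∀ n, (List.ofFn (fun i : Fin n => x i), List.ofFn (fun i : Fin n => w i)) ∈ T

/-- The branch `(x, w)` passes through the node `(s, t)`. -/
def ThroughNode (x : Cantor) (w : ℕ → ℕ) (s : List Bool) (t : List ℕ) : Prop :=
  List.ofFn (fun i : Fin s.length => x i) = s ∧ List.ofFn (fun i : Fin t.length => w i) = t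

/-- `p[T_{(s,t)}]`: the projection of the branches of `T` through the node `(s, t)`. -/
def projThrough (T : Set (List Bool × List ℕ)) (s : List Bool) (t : List ℕ) :
    Set Cantor :=
  {x | ∃ w, IsBranch T x w ∧ ThroughNode x w s t}

/-- The projection `p[T]` of the tree `T`. -/
def projT (T : Set (List Bool × List ℕ)) : Set Cantor := {x | ∃ w, IsBranch T x w}

/-- `Y` is cofinal in `X` (with respect to `⊆*`). -/
def CofinalIn (Y X : Set Cantor) : Prop := ∀ x ∈ X, ∃ y ∈ Y, AlmostSub (cset y) (cset x)

/-!
Every node outside `T'` carries a witness `b ∈ X` below which no branch through that node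
projects. There are only countably many nodes, so given `x ∈ X` there is `z ∈ X` below `x` and
below all these witnesses. A branch through `(s, t)` projecting below `z` then never enters a
node outside `T'`, so it is a branch of `T'`, and its projection lies below `x`.
-/

lemma AlmostSub.trans {a b c : Set ℕ} (hab : AlmostSub a b) (hbc : AlmostSub b c) :
    AlmostSub a c :=
  (hab.union hbc).subset fun n hn => by
    by_cases hb : n ∈ b
    · exact Or.inr ⟨hb, hn.2⟩
    · exact Or.inl ⟨hn.1, hb⟩

lemma mem_projThrough_ofFn {T : Set (List Bool × List ℕ)} {y : Cantor} {w : ℕ → ℕ}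
    (hbr : IsBranch T y w) (n : ℕ) :
    y ∈ projThrough T (List.ofFn fun i : Fin n => y i) (List.ofFn fun i : Fin n => w i) :=
  ⟨w, hbr, by constructor <;> (apply List.ext_getElem <;> simp)⟩

lemma exists_almostSub_not_almostSub_of_not_cofinalIn {X : Set Cantor} {ι : Type*}
    [Countable ι] (hX : ∀ C ⊆ X, C.Countable → ∃ z ∈ X, ∀ c ∈ C, AlmostSub (cset z) (cset c))
    (Y : ι → Set Cantor) (hY : ∀ i, ¬ CofinalIn (Y i) X) {x : Cantor} (hx : x ∈ X) :
    ∃ z ∈ X, AlmostSub (cset z) (cset x) ∧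
      ∀ i, ∀ y ∈ Y i, ¬ AlmostSub (cset y) (cset z) := by
  have hbound : ∀ i, ∃ b ∈ X, ∀ y ∈ Y i, ¬ AlmostSub (cset y) (cset b) := fun i => by
    simpa [CofinalIn] using hY i
  choose b hbX hb using hbound
  have hC : insert x (Set.range b) ⊆ X := Set.insert_subset hx (Set.range_subset_iff.2 hbX)
  obtain ⟨z, hzX, hz⟩ := hX _ hC ((Set.countable_range b).insert x)
  refine ⟨z, hzX, hz x (Set.mem_insert x _), fun i y hy hyz => hb i y hy ?_⟩
  exact hyz.trans (hz (b i) (Set.mem_insert_of_mem x ⟨i, rfl⟩))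

theorem tree_pruning_cofinal_general (T : Set (List Bool × List ℕ))
    (hctbl : ∀ C ⊆ projT T, C.Countable → ∃ x ∈ projT T, ∀ c ∈ C,
      AlmostSub (cset x) (cset c) ∧ ¬ AlmostSub (cset c) (cset x)) :
    ∀ st ∈ {st ∈ T | CofinalIn (projThrough T st.1 st.2) (projT T)},
      CofinalIn
        (projThrough {st ∈ T | CofinalIn (projThrough T st.1 st.2) (projT T)} st.1 st.2)
        (projT T) := by
  rintro st ⟨-, hcof⟩ x hx
  have hlower : ∀ C ⊆ projT T, C.Countable →
      ∃ z ∈ projT T, ∀ c ∈ C, AlmostSub (cset z) (cset c) := fun C hC hCc =>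
    (hctbl C hC hCc).imp fun _ hz => ⟨hz.1, fun c hc => (hz.2 c hc).1⟩
  obtain ⟨z, hzX, hzx, hz⟩ := exists_almostSub_not_almostSub_of_not_cofinalIn hlower
    (fun uv : {uv | uv ∈ T ∧ ¬ CofinalIn (projThrough T uv.1 uv.2) (projT T)} =>
      projThrough T uv.1.1 uv.1.2) (fun uv => uv.2.2) hx
  obtain ⟨y, ⟨w, hbr, hthr⟩, hyz⟩ := hcof z hzX
  refine ⟨y, ⟨w, fun n => ⟨hbr n, ?_⟩, hthr⟩, hyz.trans hzx⟩
  by_contra hbad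
  exact hz ⟨_, hbr n, hbad⟩ y (mem_projThrough_ofFn hbr n) hyz

/-- The cofinal-branches tree pruning claim: if `T` is a tree on `2 × ω` whose projection
`X = p[T]` is a family of infinite subsets of `ω`, linearly ordered by `⊆*`, with no
pseudointersection, and every countable subset of `X` has a strict `⊆*`-lower bound in `X`,
then for `T' = { (s,t) ∈ T : p[T_{(s,t)}] cofinal in X }`, every node `(s,t) ∈ T'`
satisfies that `p[T'_{(s,t)}]` is cofinal in `X`. -/
theorem tree_pruning_cofinal (T : Set (List Bool × List ℕ))
    (htree : ∀ st ∈ T, st.1.length = st.2.length ∧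
      ∀ n : ℕ, (st.1.take n, st.2.take n) ∈ T)
    (hinf : ∀ x ∈ projT T, (cset x).Infinite)
    (hlin : ∀ x ∈ projT T, ∀ y ∈ projT T,
      AlmostSub (cset x) (cset y) ∨ AlmostSub (cset y) (cset x))
    (hnops : ¬ ∃ z : Set ℕ, z.Infinite ∧ ∀ x ∈ projT T, AlmostSub z (cset x))
    (hctbl : ∀ C ⊆ projT T, C.Countable → ∃ x ∈ projT T, ∀ c ∈ C,
      AlmostSub (cset x) (cset c) ∧ ¬ AlmostSub (cset c) (cset x)) :
    ∀ st ∈ {st ∈ T | CofinalIn (projThrough T st.1 st.2) (projT T)},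
      CofinalIn
        (projThrough {st ∈ T | CofinalIn (projThrough T st.1 st.2) (projT T)} st.1 st.2)
        (projT T) :=
  tree_pruning_cofinal_general T hctbl
end
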